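/- arXiv:1803.05680 — 2 statements merged into one kernel-verified Lean document; each statement's English description precedes it below -/
import Mathlib

section
/- Let X be a real Banach space and let φ ∈ C¹(X,ℝ) be bounded below, with m = inf_{u∈X} φ(u). Then there exists a sequence (u_n) ⊆ X such that φ(u_n) → m and (1+‖u_n‖)‖φ'(u_n)‖_{X*} → 0 as n → ∞. -/
open Filter Topology Set

/-!
Ekeland's principle, applied to `φ` with slope `c = ε / (1 + ‖v‖)` at an `ε²`-minimizer `v`,
gives a point `u` with `φ u ≤ φ v`, `‖u - v‖ ≤ ε (1 + ‖v‖)` and `φ u ≤ φ w + c ‖w - u‖` for all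
`w`. The last inequality bounds `‖φ'(u)‖` by `c`, hence `(1 + ‖u‖) ‖φ'(u)‖ ≤ (1 + ε) ε`.

Ekeland's principle itself comes from the nested sets `S y = {w | φ w + c d(w, y) ≤ φ y}`:
choosing `yₙ₊₁ ∈ S yₙ` to minimize `φ` on `S yₙ` up to `2⁻ⁿ` forces `S yₙ₊₁` into the ball of
radius `2⁻ⁿ / c` around `yₙ₊₁`, so `(yₙ)` is Cauchy and its limit is the only point of its own `S`.
-/

namespace Ekeland

variable {Y : Type*} [MetricSpace Y] {φ : Y → ℝ} {c ε : ℝ} {u v w : Y}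

def descentSet (φ : Y → ℝ) (c : ℝ) (u : Y) : Set Y :=
  {w | φ w + c * dist w u ≤ φ u}

theorem mem_descentSet_self : u ∈ descentSet φ c u := by
  simp [descentSet]

theorem descentSet_subset (hc : 0 ≤ c) (hv : v ∈ descentSet φ c u) :
    descentSet φ c v ⊆ descentSet φ c u := fun w hw => by
  simp only [descentSet, mem_ofPred_eq] at hv hw ⊢
  nlinarith [dist_triangle w v u]

theorem isClosed_descentSet (hφ : LowerSemicontinuous φ) (c : ℝ) (u : Y) :
    IsClosed (descentSet φ c u) :=
  (hφ.add (continuous_const.mul (continuous_id.dist continuous_const)).lowerSemicontinuous)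
    |>.isClosed_preimage (φ u)

theorem exists_almost_min_descentSet (hbdd : BddBelow (range φ)) (hε : 0 < ε) (c : ℝ) (u : Y) :
    ∃ v ∈ descentSet φ c u, ∀ w ∈ descentSet φ c u, φ v ≤ φ w + ε := by
  obtain ⟨_, ⟨v, hv, rfl⟩, hlt⟩ := Real.lt_sInf_add_pos
    (Nonempty.image φ ⟨u, mem_descentSet_self⟩) hε
  exact ⟨v, hv, fun w hw => by
    linarith [csInf_le (hbdd.mono (image_subset_range _ _)) (mem_image_of_mem φ hw)]⟩

theorem mul_dist_le_of_almost_min (hc : 0 ≤ c) (hv : v ∈ descentSet φ c u)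
    (hmin : ∀ w ∈ descentSet φ c u, φ v ≤ φ w + ε) (hw : w ∈ descentSet φ c v) :
    c * dist w v ≤ ε := by
  have := hmin w (descentSet_subset hc hv hw)
  simp only [descentSet, mem_ofPred_eq] at hw
  linarith

theorem exists_seq_descentSet (hc : 0 ≤ c) (hbdd : BddBelow (range φ)) {δ : ℕ → ℝ}
    (hδ : ∀ n, 0 < δ n) (v : Y) :
    ∃ y : ℕ → Y, y 0 ∈ descentSet φ c v ∧ (∀ n, y (n + 1) ∈ descentSet φ c (y n)) ∧
      ∀ n, ∀ w ∈ descentSet φ c (y n), c * dist w (y n) ≤ δ n := by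
  choose next hnext_mem hnext_min using
    fun n u => exists_almost_min_descentSet (φ := φ) hbdd (hδ n) c u
  let y : ℕ → Y := fun n => Nat.rec (next 0 v) (fun n y => next (n + 1) y) n
  refine ⟨y, hnext_mem 0 v, fun n => hnext_mem (n + 1) (y n), ?_⟩
  rintro (_ | n) w hw <;> exact mul_dist_le_of_almost_min hc (hnext_mem _ _) (hnext_min _ _) hw

end Ekeland

open Ekeland in
theorem LowerSemicontinuous.ekeland {Y : Type*} [MetricSpace Y] [CompleteSpace Y] {φ : Y → ℝ}
    (hφ : LowerSemicontinuous φ) (hbdd : BddBelow (range φ)) {c : ℝ} (hc : 0 < c) (v : Y) :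
    ∃ u, φ u + c * dist u v ≤ φ v ∧ ∀ w ≠ u, φ u < φ w + c * dist w u := by
  obtain ⟨y, hy_zero, hy_succ, hy_small⟩ :=
    exists_seq_descentSet hc.le hbdd (fun n => pow_pos one_half_pos n) v
  have hanti : Antitone fun n => descentSet φ c (y n) :=
    antitone_nat_of_succ_le fun n => descentSet_subset hc.le (hy_succ n)
  have hclose : ∀ n, ∀ w ∈ descentSet φ c (y n), dist w (y n) ≤ (1 / 2) ^ n / c :=
    fun n w hw => by rw [le_div_iff₀' hc]; exact hy_small n w hw
  have hradius : Tendsto (fun n : ℕ => ((1 : ℝ) / 2) ^ n / c) atTop (𝓝 0) := by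
    simpa using (tendsto_pow_atTop_nhds_zero_of_lt_one (r := (1 : ℝ) / 2) (by norm_num)
      (by norm_num)).div_const c
  have hlim : ∀ w, (∀ n, w ∈ descentSet φ c (y n)) → Tendsto y atTop (𝓝 w) := fun w hw =>
    tendsto_iff_dist_tendsto_zero.2 <| squeeze_zero (fun _ => dist_nonneg)
      (fun n => dist_comm w (y n) ▸ hclose n w (hw n)) hradius
  obtain ⟨u, hu⟩ := cauchySeq_tendsto_of_complete <| cauchySeq_of_le_tendsto_0' _
    (fun n m hnm => dist_comm (y m) (y n) ▸ hclose n (y m) (hanti hnm mem_descentSet_self)) hradius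
  have hu_mem : ∀ n, u ∈ descentSet φ c (y n) := fun n =>
    (isClosed_descentSet hφ c _).mem_of_tendsto hu
      (eventually_atTop.2 ⟨n, fun m hm => hanti hm mem_descentSet_self⟩)
  refine ⟨u, descentSet_subset hc.le hy_zero (hu_mem 0), fun w hwu => ?_⟩
  by_contra! h
  exact hwu <| tendsto_nhds_unique (hlim w fun n => descentSet_subset hc.le (hu_mem n) h) hu

section Derivative

variable {X : Type*} [NormedAddCommGroup X] [NormedSpace ℝ X] {φ : X → ℝ} {u : X} {c : ℝ}

theorem neg_mul_norm_le_fderiv_apply (hφ : DifferentiableAt ℝ φ u)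
    (h : ∀ w, φ u ≤ φ w + c * ‖w - u‖) (v : X) : -(c * ‖v‖) ≤ fderiv ℝ φ u v := by
  set g : ℝ → ℝ := fun t => φ (u + t • v) + c * ‖v‖ * t
  have hmin : IsMinOn g (Ici 0) 0 := fun t (ht : 0 ≤ t) => by
    simpa [g, norm_smul, abs_of_nonneg ht, mul_comm, mul_left_comm] using h (u + t • v)
  have hline : HasDerivAt (fun t : ℝ => u + t • v) v 0 := by
    simpa using ((hasDerivAt_id (0 : ℝ)).smul_const v).const_add u
  have hφ' : HasFDerivAt φ (fderiv ℝ φ u) (u + (0 : ℝ) • v) := by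
    simpa using hφ.hasFDerivAt
  have hg : HasDerivAt g (fderiv ℝ φ u v + c * ‖v‖) 0 :=
    (hφ'.comp_hasDerivAt 0 hline).add ((hasDerivAt_id 0).const_mul _ |>.congr_deriv (mul_one _))
  have := IsMinOn.localize hmin |>.hasFDerivWithinAt_nonneg hg.hasDerivWithinAt
    (y := 1) (mem_posTangentConeAt_of_segment_subset (by simp [Icc_subset_Ici_self]))
  simp only [ContinuousLinearMap.toSpanSingleton_apply, smul_eq_mul, one_mul] at this
  linarith

theorem norm_fderiv_le_of_forall_le_add_mul_norm_sub (hφ : DifferentiableAt ℝ φ u) (hc : 0 ≤ c)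
    (h : ∀ w, φ u ≤ φ w + c * ‖w - u‖) : ‖fderiv ℝ φ u‖ ≤ c := by
  refine ContinuousLinearMap.opNorm_le_bound _ hc fun v => abs_le.2 ⟨?_, ?_⟩
  · exact neg_mul_norm_le_fderiv_apply hφ h v
  · simpa using neg_mul_norm_le_fderiv_apply hφ h (-v)

theorem exists_one_add_norm_mul_norm_fderiv_le [CompleteSpace X] (hφ : Differentiable ℝ φ)
    {ε : ℝ} (hε : 0 < ε) {v : X} (hv : ∀ w, φ v ≤ φ w + ε ^ 2) :
    ∃ u, φ u ≤ φ v ∧ (1 + ‖u‖) * ‖fderiv ℝ φ u‖ ≤ (1 + ε) * ε := by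
  have hbdd : BddBelow (range φ) := ⟨φ v - ε ^ 2, by rintro _ ⟨w, rfl⟩; linarith [hv w]⟩
  set c := ε / (1 + ‖v‖)
  have hc : 0 < c := by positivity
  obtain ⟨u, hdescent, hmin⟩ := hφ.continuous.lowerSemicontinuous.ekeland hbdd hc v
  rw [dist_eq_norm] at hdescent
  have hderiv : ‖fderiv ℝ φ u‖ ≤ c := by
    refine norm_fderiv_le_of_forall_le_add_mul_norm_sub (hφ u) hc.le fun w => ?_
    rcases eq_or_ne w u with rfl | hwu
    · simp
    · simpa [dist_eq_norm] using (hmin w hwu).le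
  have hdist : ‖u - v‖ ≤ ε * (1 + ‖v‖) := by
    have hcdist : c * ‖u - v‖ ≤ ε ^ 2 := by linarith [hv u]
    calc ‖u - v‖ = c * ‖u - v‖ / c := by field_simp
      _ ≤ ε ^ 2 / c := by gcongr
      _ = ε * (1 + ‖v‖) := by simp only [c]; field_simp
  have hnorm : 1 + ‖u‖ ≤ (1 + ε) * (1 + ‖v‖) := by
    nlinarith [norm_le_norm_add_norm_sub' u v]
  refine ⟨u, by nlinarith [norm_nonneg (u - v)], ?_⟩
  calc (1 + ‖u‖) * ‖fderiv ℝ φ u‖ ≤ (1 + ε) * (1 + ‖v‖) * c := by gcongr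
    _ = (1 + ε) * ε := by simp only [c]; field_simp

end Derivative

/-- A `C¹` functional bounded below admits a Cerami-type almost-critical minimizing
sequence: `φ(uₙ) → m = inf φ` and `(1+‖uₙ‖)‖φ'(uₙ)‖ → 0`. -/
theorem stmt1 {X : Type*} [NormedAddCommGroup X] [NormedSpace ℝ X] [CompleteSpace X]
    (φ : X → ℝ) (hφ : ContDiff ℝ 1 φ)
    (hbdd : BddBelow (Set.range φ))
    (m : ℝ) (hm : m = ⨅ u : X, φ u) :
    ∃ u : ℕ → X,
      Tendsto (fun n => φ (u n)) atTop (𝓝 m) ∧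
      Tendsto (fun n => (1 + ‖u n‖) * ‖fderiv ℝ φ (u n)‖) atTop (𝓝 0) := by
  have hm_le : ∀ x, m ≤ φ x := fun x => hm ▸ ciInf_le hbdd x
  set ε : ℕ → ℝ := fun n => 1 / (n + 1)
  have hε : ∀ n, 0 < ε n := fun n => Nat.one_div_pos_of_nat
  have hε_lim : Tendsto ε atTop (𝓝 0) := tendsto_one_div_add_atTop_nhds_zero_nat
  choose v hv using fun n => exists_lt_of_ciInf_lt (f := φ) <| show ⨅ u, φ u < m + ε n ^ 2 by
    rw [← hm]; linarith [pow_pos (hε n) 2]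
  choose u hu_le hu_small using fun n =>
    exists_one_add_norm_mul_norm_fderiv_le (hφ.differentiable one_ne_zero) (hε n) (v := v n)
      fun w => by linarith [hv n, hm_le w]
  refine ⟨u, ?_, ?_⟩
  · have hupper : Tendsto (fun n => m + ε n ^ 2) atTop (𝓝 m) := by
      simpa using tendsto_const_nhds.add (hε_lim.pow 2)
    exact tendsto_of_tendsto_of_tendsto_of_le_of_le tendsto_const_nhds hupper
      (fun n => hm_le (u n)) fun n => (hu_le n).trans (hv n).le
  · have hbound : Tendsto (fun n => (1 + ε n) * ε n) atTop (𝓝 0) := by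
      simpa using (tendsto_const_nhds.add hε_lim).mul hε_lim
    exact squeeze_zero (fun n => by positivity) hu_small hbound
end

section
/- (Noncritical interval theorem.) Let X be a real Banach space and φ ∈ C¹(X,ℝ). If φ satisfies the Cerami condition at every level c ∈ [a,b] and K_φ ∩ φ⁻¹([a,b]) = ∅, then the sublevel set φ^a is a strong deformation retract of the sublevel set φ^b, i.e. there is a continuous map h : [0,1] × φ^b → φ^b with h(0,u) = u for all u ∈ φ^b, h(1,φ^b) ⊆ φ^a, and h(t,u) = u for all u ∈ φ^a and all t ∈ [0,1]. -/
/-!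
The Cerami condition and the absence of critical points in `φ⁻¹[a, b]` give `δ > 0` with
`δ ≤ (1 + ‖u‖) ‖φ' u‖` there. Partitions of unity turn this into a continuous field `V` of descent
directions with step bounds `σ`, along which `φ` decreases at rate at least `δ / (2 (1 + ‖u‖))`.
Since `V` is merely continuous, its flow is replaced by the orbit of the explicit descent step
`u ↦ u - λ u • V u`, interpolated linearly, where `λ` vanishes on `φ^a`. The length of the orbit
is at most `descentWeight` times the total drop of `φ`, so the orbit converges and its limit lies
in `φ^a`; as this bound is locally uniform in `u`, the deformation is continuous at time `1` too.
-/

open Filter Topology Set Metric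

section

variable {X : Type*} [NormedAddCommGroup X]

theorem continuousOn_Ici_prod_of_forall_continuousOn_Icc {Y Z : Type*} [TopologicalSpace Y]
    [TopologicalSpace Z] {g : ℝ × Y → Z}
    (h : ∀ n : ℕ, ContinuousOn g (Icc (n : ℝ) (n + 1) ×ˢ univ)) :
    ContinuousOn g (Ici 0 ×ˢ univ) := by
  have hlf : LocallyFinite fun n : ℕ => Icc (n : ℝ) (n + 1) ×ˢ (univ : Set Y) := by
    have := ((locallyFinite_Icc_of_tendsto (f := fun n : ℤ => (n : ℝ))
      (g := fun n : ℤ => (n : ℝ) + 1) tendsto_intCast_atTop_atTop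
      (tendsto_atBot_add_const_right _ _ (tendsto_intCast_atBot_iff.2 tendsto_id))).comp_injective
      Nat.cast_injective).preimage_continuous (continuous_fst : Continuous (Prod.fst : ℝ × Y → ℝ))
    simpa [Function.comp_def, prod_univ] using this
  refine (hlf.continuousOn_iUnion (fun n => isClosed_Icc.prod isClosed_univ) h).mono ?_
  rintro ⟨s, y⟩ ⟨hs, -⟩
  exact mem_iUnion.2 ⟨⌊s⌋₊, ⟨Nat.floor_le hs, (Nat.lt_floor_add_one s).le⟩, trivial⟩

noncomputable def excess {Y : Type*} (φ : Y → ℝ) (a : ℝ) (u : Y) : ℝ := max (φ u - a) 0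

theorem continuous_excess {Y : Type*} [TopologicalSpace Y] {φ : Y → ℝ} (hφ : Continuous φ)
    (a : ℝ) : Continuous (excess φ a) :=
  (hφ.sub continuous_const).max continuous_const

/-- Along a descent orbit `1 + ‖u‖` grows at most like `exp (drop of φ / δ)` (a discrete Gronwall
estimate), so every step length is at most this weight times the corresponding drop of `φ`. -/
noncomputable def descentWeight (φ : X → ℝ) (a δ : ℝ) (u : X) : ℝ :=
  (1 + ‖u‖) * Real.exp (excess φ a u / δ) / δ

theorem continuous_descentWeight {φ : X → ℝ} (hφ : Continuous φ) (a δ : ℝ) :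
    Continuous (descentWeight φ a δ) := by
  unfold descentWeight
  have := continuous_excess hφ a
  fun_prop

variable [NormedSpace ℝ X]

def CeramiCondition (φ : X → ℝ) (c : ℝ) : Prop :=
  ∀ u : ℕ → X, Tendsto (fun n => φ (u n)) atTop (𝓝 c) →
    Tendsto (fun n => (1 + ‖u n‖) * ‖fderiv ℝ φ (u n)‖) atTop (𝓝 0) →
    ∃ (v : X) (σ : ℕ → ℕ), StrictMono σ ∧ Tendsto (fun n => u (σ n)) atTop (𝓝 v)

theorem exists_pos_le_mul_norm_fderiv_of_cerami {φ : X → ℝ} (hφ : Continuous φ)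
    (hφ' : Continuous (fderiv ℝ φ)) {a b : ℝ} (hcerami : ∀ c ∈ Icc a b, CeramiCondition φ c)
    (hcrit : ∀ u, fderiv ℝ φ u = 0 → φ u ∉ Icc a b) :
    ∃ δ > 0, ∀ u, φ u ∈ Icc a b → δ ≤ (1 + ‖u‖) * ‖fderiv ℝ φ u‖ := by
  set g : X → ℝ := fun u => (1 + ‖u‖) * ‖fderiv ℝ φ u‖
  have hg : Continuous g := by fun_prop
  by_contra! h
  choose u hu hgu using fun n : ℕ => h (1 / (n + 1)) Nat.one_div_pos_of_nat
  have hgu0 : Tendsto (g ∘ u) atTop (𝓝 0) :=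
    squeeze_zero (fun n => by simp only [Function.comp, g]; positivity) (fun n => (hgu n).le)
      tendsto_one_div_add_atTop_nhds_zero_nat
  obtain ⟨c, hc, ψ, hψ, hφc⟩ := isCompact_Icc.tendsto_subseq hu
  obtain ⟨v, τ, hτ, hv⟩ := hcerami c hc (u ∘ ψ) hφc (hgu0.comp hψ.tendsto_atTop)
  have hφv : φ v = c :=
    tendsto_nhds_unique ((hφ.tendsto v).comp hv) (hφc.comp hτ.tendsto_atTop)
  have hgv : g v = 0 :=
    tendsto_nhds_unique ((hg.tendsto v).comp hv) (hgu0.comp (hψ.comp hτ).tendsto_atTop)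
  refine hcrit v ?_ (hφv ▸ hc)
  simpa [g, mul_eq_zero, (by positivity : 1 + ‖v‖ ≠ 0)] using hgv

theorem ContinuousLinearMap.exists_norm_le_one_lt_apply (f : X →L[ℝ] ℝ) {r : ℝ}
    (hr : r < ‖f‖) : ∃ w : X, ‖w‖ ≤ 1 ∧ r < f w := by
  obtain ⟨w, hw, hrw⟩ := f.exists_lt_apply_of_lt_opNorm hr
  rcases le_or_gt 0 (f w) with hfw | hfw
  · exact ⟨w, hw.le, by rwa [Real.norm_of_nonneg hfw] at hrw⟩
  · exact ⟨-w, by simpa using hw.le, by rwa [Real.norm_of_nonpos hfw.le, ← map_neg] at hrw⟩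

theorem ContinuousLinearMap.apply_sub_norm_sub_le (f g : X →L[ℝ] ℝ) {w : X} (hw : ‖w‖ ≤ 1) :
    g w - ‖f - g‖ ≤ f w := by
  have := (abs_le.mp ((f - g).unit_le_opNorm w hw)).1
  rw [sub_apply] at this
  linarith

section PseudoGradient

variable {L : X → X →L[ℝ] ℝ}

theorem exists_direction_eventually_le_apply (hL : Continuous L) {x : X} (hx : L x ≠ 0) :
    ∃ w : X, ‖w‖ ≤ 1 ∧ ∀ᶠ u in 𝓝 x, 3 / 4 * ‖L u‖ ≤ L u w := by
  obtain ⟨w, hw, hxw⟩ := (L x).exists_norm_le_one_lt_apply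
    (r := 3 / 4 * ‖L x‖) (by linarith [norm_pos_iff.2 hx])
  refine ⟨w, hw, ?_⟩
  have hcont : Continuous fun u => L u w := by fun_prop
  exact ((hL.norm.const_mul _).continuousAt.eventually_lt hcont.continuousAt hxw).mono
    fun _ h => h.le

theorem exists_radius_eventually_norm_sub_le (hL : Continuous L) {x : X} (hx : L x ≠ 0) :
    ∃ r > 0, ∀ᶠ u in 𝓝 x, ∀ y ∈ closedBall u r, ‖L y - L u‖ ≤ ‖L u‖ / 4 := by
  have hN : 0 < ‖L x‖ := norm_pos_iff.2 hx
  obtain ⟨η, hη, hLη⟩ := Metric.continuous_iff.1 hL x (‖L x‖ / 10) (by positivity)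
  refine ⟨η / 2, half_pos hη, eventually_of_mem (ball_mem_nhds x (half_pos hη)) ?_⟩
  intro u hu y hy
  rw [mem_ball] at hu
  rw [mem_closedBall] at hy
  have hux := hLη u (by linarith)
  have hyx := hLη y (by linarith [dist_triangle y u x])
  rw [dist_eq_norm] at hux hyx
  have hLu : ‖L x‖ - ‖L u - L x‖ ≤ ‖L u‖ := by
    linarith [norm_sub_norm_le (L x) (L u), norm_sub_rev (L u) (L x)]
  calc ‖L y - L u‖ ≤ ‖L y - L x‖ + ‖L x - L u‖ := norm_sub_le_norm_sub_add_norm_sub ..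
    _ ≤ ‖L u‖ / 4 := by linarith [norm_sub_rev (L x) (L u)]

theorem exists_continuous_pseudoGradient (hL : Continuous L) {S : Set X} (hS : IsClosed S)
    (hLS : ∀ x ∈ S, L x ≠ 0) :
    ∃ (V : X → X) (σ : X → ℝ), Continuous V ∧ Continuous σ ∧ (∀ u, ‖V u‖ ≤ 1) ∧
      (∀ u, 0 < σ u) ∧ ∀ u ∈ S, ∀ y ∈ closedBall u (σ u), ‖L u‖ / 2 ≤ L y (V u) := by
  -- Directions and radii are glued separately: for fixed `u` each admissible set is convex,
  -- while the set of admissible pairs is not.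
  obtain ⟨V, hV⟩ : ∃ V : C(X, X), ∀ u,
      V u ∈ closedBall 0 1 ∩ ⋂ (_ : u ∈ S), {v | 3 / 4 * ‖L u‖ ≤ L u v} := by
    refine exists_continuous_forall_mem_convex_of_local_const
      (fun u => (convex_closedBall 0 1).inter
        (convex_iInter fun _ => convex_halfSpace_ge (L u).isLinear _)) fun x => ?_
    by_cases hx : x ∈ S
    · obtain ⟨w, hw, hev⟩ := exists_direction_eventually_le_apply hL (hLS x hx)
      exact ⟨w, hev.mono fun u hu => ⟨mem_closedBall_zero_iff.2 hw, mem_iInter.2 fun _ => hu⟩⟩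
    · exact ⟨0, eventually_of_mem (hS.isOpen_compl.mem_nhds hx) fun u hu =>
        ⟨mem_closedBall_self zero_le_one, mem_iInter.2 fun h => absurd h hu⟩⟩
  obtain ⟨σ, hσ⟩ : ∃ σ : C(X, ℝ), ∀ u, σ u ∈ {r | 0 < r ∧
      (u ∈ S → ∀ y ∈ closedBall u r, ‖L y - L u‖ ≤ ‖L u‖ / 4)} := by
    refine exists_continuous_forall_mem_convex_of_local_const (fun u => OrdConnected.convex
      ⟨fun r₁ h₁ r₂ h₂ r hr => ⟨h₁.1.trans_le hr.1, fun hu y hy =>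
        h₂.2 hu y (closedBall_subset_closedBall hr.2 hy)⟩⟩) fun x => ?_
    by_cases hx : x ∈ S
    · obtain ⟨r, hr, hev⟩ := exists_radius_eventually_norm_sub_le hL (hLS x hx)
      exact ⟨r, hev.mono fun u hu => ⟨hr, fun _ => hu⟩⟩
    · exact ⟨1, eventually_of_mem (hS.isOpen_compl.mem_nhds hx) fun u hu =>
        ⟨one_pos, fun h => absurd h hu⟩⟩
  refine ⟨V, σ, V.continuous, σ.continuous, fun u => mem_closedBall_zero_iff.1 (hV u).1,
    fun u => (hσ u).1, fun u hu y hy => ?_⟩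
  have hdir : 3 / 4 * ‖L u‖ ≤ L u (V u) := mem_iInter.1 (hV u).2 hu
  have hosc := (hσ u).2 hu y hy
  have := (L y).apply_sub_norm_sub_le (L u) (mem_closedBall_zero_iff.1 (hV u).1)
  linarith

end PseudoGradient

theorem apply_sub_smul_le_of_le_fderiv {φ : X → ℝ} (hφ : Differentiable ℝ φ) {u v : X} {r c : ℝ}
    (hv : ‖v‖ ≤ 1) (h : ∀ y ∈ closedBall u r, c ≤ fderiv ℝ φ y v) {μ : ℝ} (hμ : μ ∈ Icc 0 r) :
    φ (u - μ • v) ≤ φ u - μ * c := by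
  have hderiv : ∀ τ : ℝ, HasDerivAt (fun τ => φ (u - τ • v)) (fderiv ℝ φ (u - τ • v) (-v)) τ := by
    intro τ
    have hline : HasDerivAt (fun τ : ℝ => u - τ • v) (-v) τ := by
      simpa using ((hasDerivAt_id τ).smul_const v).const_sub u
    exact (hφ _).hasFDerivAt.comp_hasDerivAt τ hline
  have hmem : ∀ τ ∈ Icc 0 μ, u - τ • v ∈ closedBall u r := by
    intro τ hτ
    rw [mem_closedBall, dist_eq_norm, sub_sub_cancel_left, norm_neg, norm_smul,
      Real.norm_of_nonneg hτ.1]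
    nlinarith [mul_le_mul_of_nonneg_left hv hτ.1, hτ.2, hμ.2]
  have := (convex_Icc 0 μ).image_sub_le_mul_sub_of_deriv_le
    (fun τ _ => (hderiv τ).continuousAt.continuousWithinAt)
    (fun τ _ => (hderiv τ).differentiableAt.differentiableWithinAt) (C := -c)
    (fun τ hτ => by
      rw [(hderiv τ).deriv, map_neg, neg_le_neg_iff]
      exact h _ (hmem τ (interior_subset hτ)))
    0 (left_mem_Icc.2 hμ.1) μ (right_mem_Icc.2 hμ.1) hμ.1
  simp only [zero_smul, sub_zero] at this
  linarith

structure DescentField (φ : X → ℝ) (a b δ : ℝ) where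
  V : X → X
  σ : X → ℝ
  continuous_V : Continuous V
  continuous_σ : Continuous σ
  norm_V_le : ∀ u, ‖V u‖ ≤ 1
  σ_pos : ∀ u, 0 < σ u
  δ_pos : 0 < δ
  descent : ∀ u, φ u ∈ Icc a b → ∀ μ ∈ Icc 0 (σ u),
    φ (u - μ • V u) ≤ φ u - μ * (δ / (1 + ‖u‖))

theorem exists_descentField {φ : X → ℝ} (hφ : ContDiff ℝ 1 φ) {a b δ : ℝ} (hδ : 0 < δ)
    (hδφ : ∀ u, φ u ∈ Icc a b → δ ≤ (1 + ‖u‖) * ‖fderiv ℝ φ u‖) :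
    Nonempty (DescentField φ a b (δ / 2)) := by
  obtain ⟨V, σ, hV, hσ, hV1, hσ0, hdesc⟩ := exists_continuous_pseudoGradient
    (hφ.continuous_fderiv one_ne_zero) (isClosed_Icc.preimage hφ.continuous)
    fun u hu h0 => by simpa [h0, hδ.not_ge] using hδφ u hu
  refine ⟨⟨V, σ, hV, hσ, hV1, hσ0, half_pos hδ, fun u hu μ hμ => ?_⟩⟩
  have hdrop := apply_sub_smul_le_of_le_fderiv (hφ.differentiable one_ne_zero) (hV1 u)
    (hdesc u hu) hμ
  have hrate : δ / 2 / (1 + ‖u‖) ≤ ‖fderiv ℝ φ u‖ / 2 := by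
    rw [div_right_comm, div_le_div_iff_of_pos_right two_pos, div_le_iff₀' (by positivity)]
    exact hδφ u hu
  nlinarith [hμ.1]

namespace DescentField

variable {φ : X → ℝ} {a b δ : ℝ} (P : DescentField φ a b δ)

/-- The cap `excess φ a u / δ` freezes `φ^a` and keeps a step from descending further than the
height of `u` above `a` (`drop_le_excess`). -/
noncomputable def stepLength (u : X) : ℝ := min (P.σ u) (excess φ a u / δ)

noncomputable def partialStep (τ : ℝ) (u : X) : X := u - (τ * P.stepLength u) • P.V u

noncomputable def step (u : X) : X := P.partialStep 1 u

noncomputable def drop (u : X) : ℝ := P.stepLength u * (δ / (1 + ‖u‖))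

noncomputable def flow (s : ℝ) (u : X) : X := P.partialStep (s - ⌊s⌋₊) (P.step^[⌊s⌋₊] u)

noncomputable def limit (u : X) : X := limUnder atTop fun k => P.step^[k] u

noncomputable def deformation (t : ℝ) (u : X) : X :=
  if t < 1 then P.flow (t / (1 - t)) u else P.limit u

theorem stepLength_nonneg (u : X) : 0 ≤ P.stepLength u :=
  le_min (P.σ_pos u).le (div_nonneg (le_max_right _ _) P.δ_pos.le)

theorem stepLength_eq_zero {u : X} (hu : φ u ≤ a) : P.stepLength u = 0 := by
  simp [stepLength, excess, max_eq_right (sub_nonpos.2 hu), (P.σ_pos u).le]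

theorem stepLength_pos {u : X} (hu : a < φ u) : 0 < P.stepLength u :=
  lt_min (P.σ_pos u) (div_pos (lt_max_of_lt_left (sub_pos.2 hu)) P.δ_pos)

theorem stepLength_eq_mul_drop (u : X) : P.stepLength u = (1 + ‖u‖) / δ * P.drop u := by
  have := P.δ_pos.ne'
  simp only [drop]
  field_simp

theorem drop_nonneg (u : X) : 0 ≤ P.drop u :=
  mul_nonneg (P.stepLength_nonneg u) (div_nonneg P.δ_pos.le (by positivity))

theorem drop_le_excess (u : X) : P.drop u ≤ excess φ a u := by
  have he : 0 ≤ excess φ a u := le_max_right _ _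
  calc P.drop u ≤ excess φ a u / δ * (δ / (1 + ‖u‖)) :=
        mul_le_mul_of_nonneg_right (min_le_right _ _) (div_nonneg P.δ_pos.le (by positivity))
    _ = excess φ a u / (1 + ‖u‖) := by field_simp [P.δ_pos.ne']
    _ ≤ excess φ a u := div_le_self he (by simp)

theorem continuous_stepLength (hφ : Continuous φ) : Continuous P.stepLength :=
  P.continuous_σ.min ((continuous_excess hφ a).div_const δ)

theorem continuous_partialStep (hφ : Continuous φ) :
    Continuous fun p : ℝ × X => P.partialStep p.1 p.2 :=
  continuous_snd.sub ((continuous_fst.mul ((P.continuous_stepLength hφ).comp continuous_snd)).smul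
    (P.continuous_V.comp continuous_snd))

theorem continuous_iterate_step (hφ : Continuous φ) (k : ℕ) : Continuous P.step^[k] :=
  ((P.continuous_partialStep hφ).comp (continuous_const.prodMk continuous_id)).iterate k

@[simp]
theorem partialStep_zero (u : X) : P.partialStep 0 u = u := by
  simp [partialStep]

theorem partialStep_of_le {u : X} (hu : φ u ≤ a) (τ : ℝ) : P.partialStep τ u = u := by
  simp [partialStep, P.stepLength_eq_zero hu]

theorem step_of_le {u : X} (hu : φ u ≤ a) : P.step u = u :=
  P.partialStep_of_le hu 1

theorem norm_partialStep_sub_le {τ : ℝ} (hτ : τ ∈ Icc 0 1) (u : X) :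
    ‖P.partialStep τ u - u‖ ≤ P.stepLength u := by
  have hℓ := P.stepLength_nonneg u
  rw [partialStep, sub_sub_cancel_left, norm_neg, norm_smul,
    Real.norm_of_nonneg (mul_nonneg hτ.1 hℓ)]
  exact (mul_le_of_le_one_right (mul_nonneg hτ.1 hℓ) (P.norm_V_le u)).trans
    (mul_le_of_le_one_left hℓ hτ.2)

theorem apply_partialStep_le {u : X} (hu : φ u ≤ b) {τ : ℝ} (hτ : τ ∈ Icc 0 1) :
    φ (P.partialStep τ u) ≤ φ u - τ * P.drop u := by
  rcases le_or_gt a (φ u) with ha | ha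
  · have hℓ := P.stepLength_nonneg u
    have := P.descent u ⟨ha, hu⟩ (τ * P.stepLength u)
      ⟨mul_nonneg hτ.1 hℓ, mul_le_of_le_one_left hℓ hτ.2 |>.trans (min_le_left _ _)⟩
    rw [partialStep, drop]
    linarith
  · simp [P.partialStep_of_le ha.le, P.stepLength_eq_zero ha.le, drop]

theorem excess_step_le {u : X} (hu : φ u ≤ b) :
    excess φ a (P.step u) ≤ excess φ a u - P.drop u := by
  have := P.apply_partialStep_le hu (τ := 1) ⟨zero_le_one, le_rfl⟩
  refine max_le ?_ (sub_nonneg.2 (P.drop_le_excess u))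
  simp only [step, excess]
  linarith [le_max_left (φ u - a) 0]

theorem apply_iterate_step_le {u : X} (hu : φ u ≤ b) (k : ℕ) : φ (P.step^[k] u) ≤ b := by
  induction k with
  | zero => exact hu
  | succ k ih =>
    rw [Function.iterate_succ_apply', step]
    have := P.apply_partialStep_le ih (τ := 1) ⟨zero_le_one, le_rfl⟩
    linarith [P.drop_nonneg (P.step^[k] u)]

theorem one_add_norm_step_le {u : X} (hu : φ u ≤ b) :
    1 + ‖P.step u‖ ≤ (1 + ‖u‖) * Real.exp ((excess φ a u - excess φ a (P.step u)) / δ) := by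
  have hnorm : ‖P.step u‖ ≤ ‖u‖ + P.stepLength u := by
    have : ‖P.step u - u‖ ≤ P.stepLength u := P.norm_partialStep_sub_le ⟨zero_le_one, le_rfl⟩ u
    linarith [norm_le_norm_add_norm_sub' (P.step u) u]
  calc 1 + ‖P.step u‖ ≤ 1 + ‖u‖ + (1 + ‖u‖) / δ * P.drop u := by
        linarith [P.stepLength_eq_mul_drop u]
    _ = (1 + ‖u‖) * (P.drop u / δ + 1) := by ring
    _ ≤ (1 + ‖u‖) * Real.exp (P.drop u / δ) := by gcongr; exact Real.add_one_le_exp _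
    _ ≤ _ := by
        gcongr
        · exact P.δ_pos.le
        · linarith [P.excess_step_le hu]

theorem one_add_norm_iterate_step_le {u : X} (hu : φ u ≤ b) (k : ℕ) :
    1 + ‖P.step^[k] u‖ ≤
      (1 + ‖u‖) * Real.exp ((excess φ a u - excess φ a (P.step^[k] u)) / δ) := by
  induction k with
  | zero => simp
  | succ k ih =>
    rw [Function.iterate_succ_apply']
    calc 1 + ‖P.step (P.step^[k] u)‖
        ≤ (1 + ‖P.step^[k] u‖) *
          Real.exp ((excess φ a (P.step^[k] u) - excess φ a (P.step (P.step^[k] u))) / δ) :=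
          P.one_add_norm_step_le (P.apply_iterate_step_le hu k)
      _ ≤ (1 + ‖u‖) * Real.exp ((excess φ a u - excess φ a (P.step^[k] u)) / δ) *
          Real.exp ((excess φ a (P.step^[k] u) - excess φ a (P.step (P.step^[k] u))) / δ) := by
          gcongr
      _ = _ := by rw [mul_assoc, ← Real.exp_add, ← add_div, sub_add_sub_cancel]

theorem stepLength_iterate_step_le {u : X} (hu : φ u ≤ b) (k : ℕ) :
    P.stepLength (P.step^[k] u) ≤ descentWeight φ a δ u * P.drop (P.step^[k] u) := by
  have hδ := P.δ_pos
  rw [P.stepLength_eq_mul_drop, descentWeight]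
  gcongr
  · exact P.drop_nonneg _
  refine (P.one_add_norm_iterate_step_le hu k).trans ?_
  gcongr
  exact sub_le_self _ (le_max_right _ _)

theorem sum_drop_iterate_step_le {u : X} (hu : φ u ≤ b) {K L : ℕ} (hKL : K ≤ L) :
    ∑ j ∈ Finset.Ico K L, P.drop (P.step^[j] u) ≤
      excess φ a (P.step^[K] u) - excess φ a (P.step^[L] u) := by
  induction L, hKL using Nat.le_induction with
  | base => simp
  | succ L hKL ih =>
    rw [Finset.sum_Ico_succ_top hKL, Function.iterate_succ_apply']
    linarith [P.excess_step_le (P.apply_iterate_step_le hu L)]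

theorem sum_stepLength_iterate_step_le {u : X} (hu : φ u ≤ b) {K L : ℕ} (hKL : K ≤ L) :
    ∑ j ∈ Finset.Ico K L, P.stepLength (P.step^[j] u) ≤
      descentWeight φ a δ u * excess φ a (P.step^[K] u) := by
  have hW : 0 ≤ descentWeight φ a δ u := by unfold descentWeight; have := P.δ_pos; positivity
  calc ∑ j ∈ Finset.Ico K L, P.stepLength (P.step^[j] u)
      ≤ ∑ j ∈ Finset.Ico K L, descentWeight φ a δ u * P.drop (P.step^[j] u) :=
        Finset.sum_le_sum fun j _ => P.stepLength_iterate_step_le hu j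
    _ ≤ descentWeight φ a δ u * (excess φ a (P.step^[K] u) - excess φ a (P.step^[L] u)) := by
        rw [← Finset.mul_sum]
        exact mul_le_mul_of_nonneg_left (P.sum_drop_iterate_step_le hu hKL) hW
    _ ≤ descentWeight φ a δ u * excess φ a (P.step^[K] u) :=
        mul_le_mul_of_nonneg_left (sub_le_self _ (le_max_right _ _)) hW

theorem dist_iterate_step_le_sum (u : X) {K L : ℕ} (hKL : K ≤ L) :
    dist (P.step^[K] u) (P.step^[L] u) ≤ ∑ j ∈ Finset.Ico K L, P.stepLength (P.step^[j] u) := by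
  refine (dist_le_Ico_sum_dist (fun k => P.step^[k] u) hKL).trans (Finset.sum_le_sum fun j _ => ?_)
  rw [dist_comm, dist_eq_norm, Function.iterate_succ_apply']
  exact P.norm_partialStep_sub_le ⟨zero_le_one, le_rfl⟩ _

theorem dist_iterate_step_le {u : X} (hu : φ u ≤ b) {K L : ℕ} (hKL : K ≤ L) :
    dist (P.step^[K] u) (P.step^[L] u) ≤ descentWeight φ a δ u * excess φ a (P.step^[K] u) :=
  (P.dist_iterate_step_le_sum u hKL).trans (P.sum_stepLength_iterate_step_le hu hKL)

theorem summable_stepLength_iterate_step {u : X} (hu : φ u ≤ b) :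
    Summable fun k => P.stepLength (P.step^[k] u) :=
  summable_of_sum_range_le (fun k => P.stepLength_nonneg _) fun n => by
    have := P.sum_stepLength_iterate_step_le hu (Nat.zero_le n)
    rwa [← Finset.range_eq_Ico, Function.iterate_zero_apply] at this

theorem cauchySeq_iterate_step {u : X} (hu : φ u ≤ b) : CauchySeq fun k => P.step^[k] u := by
  refine cauchySeq_of_summable_dist ((P.summable_stepLength_iterate_step hu).of_nonneg_of_le
    (fun k => dist_nonneg) fun k => ?_)
  simpa using P.dist_iterate_step_le_sum u (Nat.le_succ k)

theorem limit_of_le {u : X} (hu : φ u ≤ a) : P.limit u = u := by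
  have : (fun k => P.step^[k] u) = fun _ => u :=
    funext fun k => Function.iterate_fixed (P.step_of_le hu) k
  rw [limit, this]
  exact tendsto_const_nhds.limUnder_eq

theorem flow_eq {n : ℕ} {s : ℝ} (hs : s ∈ Icc (n : ℝ) (n + 1)) (u : X) :
    P.flow s u = P.partialStep (s - n) (P.step^[n] u) := by
  rcases hs.2.lt_or_eq with hlt | rfl
  · rw [flow, (Nat.floor_eq_iff ((Nat.cast_nonneg n).trans hs.1)).2 ⟨hs.1, hlt⟩]
  · have : ⌊(n : ℝ) + 1⌋₊ = n + 1 := by exact_mod_cast Nat.floor_natCast (n + 1)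
    rw [flow, this, Function.iterate_succ_apply']
    simp [step]

theorem flow_zero (u : X) : P.flow 0 u = u := by
  simp [flow]

theorem flow_of_le {u : X} (hu : φ u ≤ a) (s : ℝ) : P.flow s u = u := by
  rw [flow, Function.iterate_fixed (P.step_of_le hu), P.partialStep_of_le hu]

theorem apply_flow_le {u : X} (hu : φ u ≤ b) {s : ℝ} (hs : 0 ≤ s) : φ (P.flow s u) ≤ b := by
  have hτ : s - ⌊s⌋₊ ∈ Icc (0 : ℝ) 1 :=
    ⟨sub_nonneg.2 (Nat.floor_le hs), by linarith [Nat.lt_floor_add_one s]⟩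
  have hdrop := P.apply_partialStep_le (P.apply_iterate_step_le hu ⌊s⌋₊) hτ
  rw [flow]
  linarith [P.apply_iterate_step_le hu ⌊s⌋₊, mul_nonneg hτ.1 (P.drop_nonneg (P.step^[⌊s⌋₊] u))]

theorem dist_flow_iterate_step_le {u : X} (hu : φ u ≤ b) {K : ℕ} {s : ℝ} (hKs : (K : ℝ) ≤ s) :
    dist (P.flow s u) (P.step^[K] u) ≤ descentWeight φ a δ u * excess φ a (P.step^[K] u) := by
  set n := ⌊s⌋₊
  have hs : 0 ≤ s := (Nat.cast_nonneg K).trans hKs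
  have hKn : K ≤ n := Nat.le_floor hKs
  have hτ : s - n ∈ Icc (0 : ℝ) 1 :=
    ⟨sub_nonneg.2 (Nat.floor_le hs), by linarith [Nat.lt_floor_add_one s]⟩
  calc dist (P.flow s u) (P.step^[K] u)
      ≤ dist (P.flow s u) (P.step^[n] u) + dist (P.step^[K] u) (P.step^[n] u) := by
        rw [dist_comm (P.step^[K] u)]
        exact dist_triangle _ _ _
    _ ≤ P.stepLength (P.step^[n] u) + ∑ j ∈ Finset.Ico K n, P.stepLength (P.step^[j] u) :=
        add_le_add (by rw [dist_eq_norm]; exact P.norm_partialStep_sub_le hτ _)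
          (P.dist_iterate_step_le_sum u hKn)
    _ = ∑ j ∈ Finset.Ico K (n + 1), P.stepLength (P.step^[j] u) := by
        rw [Finset.sum_Ico_succ_top hKn, add_comm]
    _ ≤ _ := P.sum_stepLength_iterate_step_le hu (hKn.trans n.le_succ)

theorem continuousOn_flow (hφ : Continuous φ) :
    ContinuousOn (fun p : ℝ × X => P.flow p.1 p.2) (Ici 0 ×ˢ univ) :=
  continuousOn_Ici_prod_of_forall_continuousOn_Icc fun n =>
    ((P.continuous_partialStep hφ).comp ((continuous_fst.sub continuous_const).prodMk
      ((P.continuous_iterate_step hφ n).comp continuous_snd))).continuousOn.congr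
      fun p hp => P.flow_eq hp.1 p.2

theorem deformation_zero (u : X) : P.deformation 0 u = u := by
  simp [deformation, P.flow_zero]

theorem deformation_of_le {u : X} (hu : φ u ≤ a) (t : ℝ) : P.deformation t u = u := by
  unfold deformation
  split_ifs
  · exact P.flow_of_le hu _
  · exact P.limit_of_le hu

theorem deformation_one (u : X) : P.deformation 1 u = P.limit u := by
  simp [deformation]

theorem continuousWithinAt_deformation_of_lt_one (hφ : Continuous φ) {p : ℝ × X}
    (hp0 : 0 ≤ p.1) (hp1 : p.1 < 1) :
    ContinuousWithinAt (fun q : ℝ × X => P.deformation q.1 q.2) (Icc 0 1 ×ˢ univ) p := by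
  have hrep : ContinuousAt (fun q : ℝ × X => (q.1 / (1 - q.1), q.2)) p :=
    (continuousAt_fst.div (continuousAt_const.sub continuousAt_fst)
      (sub_pos.2 hp1).ne').prodMk continuousAt_snd
  have hflow : ContinuousWithinAt (fun q : ℝ × X => P.flow (q.1 / (1 - q.1)) q.2)
      (Icc 0 1 ×ˢ univ) p :=
    ContinuousWithinAt.comp (g := fun q : ℝ × X => P.flow q.1 q.2)
      (f := fun q : ℝ × X => (q.1 / (1 - q.1), q.2))
      (P.continuousOn_flow hφ _ ⟨div_nonneg hp0 (sub_pos.2 hp1).le, trivial⟩)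
      hrep.continuousWithinAt fun q hq => ⟨div_nonneg hq.1.1 (sub_nonneg.2 hq.1.2), trivial⟩
  refine hflow.congr_of_eventuallyEq ?_ (if_pos hp1)
  filter_upwards [nhdsWithin_le_nhds ((isOpen_lt continuous_fst continuous_const).mem_nhds hp1)]
    with q hq
  exact if_pos hq

variable [CompleteSpace X]

theorem tendsto_iterate_step_limit {u : X} (hu : φ u ≤ b) :
    Tendsto (fun k => P.step^[k] u) atTop (𝓝 (P.limit u)) :=
  (P.cauchySeq_iterate_step hu).tendsto_limUnder

theorem apply_limit_le (hφ : Continuous φ) {u : X} (hu : φ u ≤ b) : φ (P.limit u) ≤ a := by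
  by_contra! h
  have hlim := ((P.continuous_stepLength hφ).tendsto _).comp (P.tendsto_iterate_step_limit hu)
  exact (P.stepLength_pos h).ne'
    (tendsto_nhds_unique hlim (P.summable_stepLength_iterate_step hu).tendsto_atTop_zero)

theorem dist_limit_iterate_step_le {u : X} (hu : φ u ≤ b) (K : ℕ) :
    dist (P.limit u) (P.step^[K] u) ≤ descentWeight φ a δ u * excess φ a (P.step^[K] u) := by
  refine le_of_tendsto ((P.tendsto_iterate_step_limit hu).dist tendsto_const_nhds) ?_
  filter_upwards [eventually_ge_atTop K] with L hL
  rw [dist_comm]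
  exact P.dist_iterate_step_le hu hL

theorem tendsto_descentWeight_mul_excess_iterate_step (hφ : Continuous φ) {u : X} (hu : φ u ≤ b) :
    Tendsto (fun K => descentWeight φ a δ u * excess φ a (P.step^[K] u)) atTop (𝓝 0) := by
  have h := ((continuous_excess hφ a).tendsto _).comp (P.tendsto_iterate_step_limit hu)
  rw [excess, max_eq_right (sub_nonpos.2 (P.apply_limit_le hφ hu))] at h
  simpa using h.const_mul (descentWeight φ a δ u)

theorem apply_deformation_le (hφ : Continuous φ) (hab : a ≤ b) {u : X} (hu : φ u ≤ b) {t : ℝ}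
    (ht : t ∈ Icc 0 1) : φ (P.deformation t u) ≤ b := by
  unfold deformation
  split_ifs
  · exact P.apply_flow_le hu (div_nonneg ht.1 (sub_nonneg.2 ht.2))
  · exact (P.apply_limit_le hφ hu).trans hab

theorem apply_deformation_one_le (hφ : Continuous φ) {u : X} (hu : φ u ≤ b) :
    φ (P.deformation 1 u) ≤ a := by
  rw [deformation_one]
  exact P.apply_limit_le hφ hu

theorem dist_deformation_iterate_step_le {u : X} (hu : φ u ≤ b) {K : ℕ} {t : ℝ}
    (hKt : (K : ℝ) / (K + 1) ≤ t) :
    dist (P.deformation t u) (P.step^[K] u) ≤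
      descentWeight φ a δ u * excess φ a (P.step^[K] u) := by
  unfold deformation
  split_ifs with h
  · refine P.dist_flow_iterate_step_le hu ?_
    rw [le_div_iff₀ (sub_pos.2 h)]
    rw [div_le_iff₀ (by positivity)] at hKt
    linarith
  · exact P.dist_limit_iterate_step_le hu K

theorem continuousWithinAt_deformation_one (hφ : Continuous φ) {u : X} (hu : φ u ≤ b) :
    ContinuousWithinAt (fun q : ℝ × X => P.deformation q.1 q.2) (Icc 0 1 ×ˢ {v | φ v ≤ b})
      (1, u) := by
  refine continuousWithinAt_of_locally_uniform_approx_of_continuousWithinAt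
    ⟨right_mem_Icc.2 zero_le_one, hu⟩ fun U hU => ?_
  obtain ⟨ε, hε, hεU⟩ := Metric.mem_uniformity_dist.1 hU
  obtain ⟨K, hK⟩ :=
    ((P.tendsto_descentWeight_mul_excess_iterate_step hφ hu).eventually (gt_mem_nhds hε)).exists
  have hbound : Continuous fun v => descentWeight φ a δ v * excess φ a (P.step^[K] v) :=
    (continuous_descentWeight hφ a δ).mul ((continuous_excess hφ a).comp
      (P.continuous_iterate_step hφ K))
  have hnhds : {q : ℝ × X | (K : ℝ) / (K + 1) < q.1 ∧
      descentWeight φ a δ q.2 * excess φ a (P.step^[K] q.2) < ε} ∈ 𝓝 (1, u) :=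
    ((isOpen_lt continuous_const continuous_fst).inter
      (isOpen_lt (hbound.comp continuous_snd) continuous_const)).mem_nhds
      ⟨(div_lt_one (by positivity : (0 : ℝ) < K + 1)).2 (lt_add_one _), hK⟩
  refine ⟨_, inter_mem self_mem_nhdsWithin (mem_nhdsWithin_of_mem_nhds hnhds),
    fun q => P.step^[K] q.2,
    ((P.continuous_iterate_step hφ K).comp continuous_snd).continuousWithinAt, ?_⟩
  rintro q ⟨⟨-, hq⟩, hKq, hWq⟩
  exact hεU ((P.dist_deformation_iterate_step_le hq hKq.le).trans_lt hWq)

theorem continuousOn_deformation (hφ : Continuous φ) :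
    ContinuousOn (fun p : ℝ × X => P.deformation p.1 p.2) (Icc 0 1 ×ˢ {u | φ u ≤ b}) := by
  rintro ⟨t, u⟩ ⟨ht, hu⟩
  rcases ht.2.lt_or_eq with h1 | rfl
  · exact (P.continuousWithinAt_deformation_of_lt_one hφ ht.1 h1).mono
      (prod_mono subset_rfl (subset_univ _))
  · exact P.continuousWithinAt_deformation_one hφ hu

end DescentField

end

/-- The noncritical interval theorem: if `φ` satisfies the Cerami condition at every
level `c ∈ [a,b]` and has no critical points with values in `[a,b]`, then the sublevel
set `φ^a` is a strong deformation retract of `φ^b`. -/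
theorem stmt3 {X : Type*} [NormedAddCommGroup X] [NormedSpace ℝ X] [CompleteSpace X]
    (φ : X → ℝ) (hφ : ContDiff ℝ 1 φ) (a b : ℝ) (hab : a ≤ b)
    (hCerami : ∀ c : ℝ, a ≤ c → c ≤ b → ∀ u : ℕ → X,
      Tendsto (fun n => φ (u n)) atTop (𝓝 c) →
      Tendsto (fun n => (1 + ‖u n‖) * ‖fderiv ℝ φ (u n)‖) atTop (𝓝 0) →
      ∃ (v : X) (σ : ℕ → ℕ), StrictMono σ ∧ Tendsto (fun n => u (σ n)) atTop (𝓝 v))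
    (hnocrit : ∀ u : X, fderiv ℝ φ u = 0 → ¬(a ≤ φ u ∧ φ u ≤ b)) :
    ∃ h : ℝ → X → X,
      ContinuousOn (fun q : ℝ × X => h q.1 q.2)
        (Set.Icc (0:ℝ) 1 ×ˢ {u : X | φ u ≤ b}) ∧
      (∀ u : X, φ u ≤ b → h 0 u = u) ∧
      (∀ t ∈ Set.Icc (0:ℝ) 1, ∀ u : X, φ u ≤ b → φ (h t u) ≤ b) ∧
      (∀ u : X, φ u ≤ b → φ (h 1 u) ≤ a) ∧
      (∀ t ∈ Set.Icc (0:ℝ) 1, ∀ u : X, φ u ≤ a → h t u = u) := by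
  obtain ⟨δ, hδ, hδφ⟩ := exists_pos_le_mul_norm_fderiv_of_cerami hφ.continuous
    (hφ.continuous_fderiv one_ne_zero) (fun c hc => hCerami c hc.1 hc.2) hnocrit
  obtain ⟨P⟩ := exists_descentField hφ hδ hδφ
  exact ⟨P.deformation, P.continuousOn_deformation hφ.continuous,
    fun u _ => P.deformation_zero u,
    fun t ht u hu => P.apply_deformation_le hφ.continuous hab hu ht,
    fun u hu => P.apply_deformation_one_le hφ.continuous hu,
    fun t _ u hu => P.deformation_of_le hu t⟩
end
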